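/- Let n ≥ 1, let A ∈ ℝ^{n×n} be Metzler and Hurwitz stable, and let b₀ ∈ ℝⁿ with b₀ ≥ 0 entrywise. Define g₀ := −eₙᵀA⁻¹b₀ and g_n := −eₙᵀA⁻¹eₙ, and let μ satisfy 0 < μ < g₀. Then for all α > 0 and all k_p > 0, the (n+1)×(n+1) matrix [[Ā, −k_p μ eₙ], [(α(g₀ − μ)/(g_n μ k_p)) eₙᵀ, 0]] is Hurwitz stable, where Ā := A − ((g₀ − μ)/(g_n μ)) eₙeₙᵀ. -/

import Mathlib

/-!
Put `K = (-A)⁻¹` and `R(s) = (s • 1 - A)⁻¹`. For Metzler `A`, `R(s) ≥ 0` entrywise for large `s`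
(Neumann series of `A + σ • 1 ≥ 0`). Hurwitz stability makes `R` continuous, hence bounded, on
`[0, s₀]`, and the Neumann step `R(s) = (1 - (t - s) R(t))⁻¹ R(t)` carries `R ≥ 0` down to `s = 0`
in steps of uniform length. So `K ≥ 0`, which gives `v = K 1 > 0` and `w = Kᵀ 1 > 0` with
`A v = Aᵀ w = -1`, and `gₙ = K l l > 0`.

Subtracting the nonnegative diagonal `c eₙ eₙᵀ` keeps `Ā v < 0` and `Āᵀ w < 0`. With `p = w / v`,
AM–GM on the off-diagonal terms gives
`∑ p_i Ā_ij a_i a_j ≤ ½ ∑ (p_i (Ā v)_i + (Āᵀ w)_i) a_i² / v_i < 0` for real `a ≠ 0`, so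
`Re (x* diag p Ā x) < 0` for complex `x ≠ 0`. For an eigenvector `(x, ζ)` of the Jacobian with
eigenvalue `z`, the weight `diag (p, k)` with `k γ = k_p μ p_l` makes the coupling terms cancel:
`Re z · (∑ p_i |x_i|² + k |ζ|²) = Re (x* diag p Ā x)`, and `x ≠ 0` because `x = 0` forces `ζ = 0`.
-/

open Matrix

/-- A real square matrix is Metzler if all its off-diagonal entries are nonnegative. -/
def Metzler {m : Type*} [Fintype m] (M : Matrix m m ℝ) : Prop :=
  ∀ i j, i ≠ j → 0 ≤ M i j

/-- A real square matrix is Hurwitz stable if all its (complex) eigenvalues have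
negative real part. -/
def HurwitzStable {m : Type*} [Fintype m] [DecidableEq m] (M : Matrix m m ℝ) : Prop :=
  ∀ z ∈ spectrum ℂ (M.map Complex.ofReal), z.re < 0

theorem Matrix.mul_apply_nonneg {l m n R : Type*} [Fintype m] [Semiring R] [PartialOrder R]
    [IsOrderedRing R] {P : Matrix l m R} {Q : Matrix m n R} (hP : ∀ i j, 0 ≤ P i j)
    (hQ : ∀ i j, 0 ≤ Q i j) (i : l) (j : n) : 0 ≤ (P * Q) i j :=
  Finset.sum_nonneg fun k _ => mul_nonneg (hP i k) (hQ k j)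

theorem Matrix.smul_vecMulVec_single_self {m R : Type*} [DecidableEq m] [Semiring R]
    (c : R) (l : m) : c • vecMulVec (Pi.single l 1) (Pi.single l 1) = diagonal (Pi.single l c) := by
  rw [← single_eq_single_vecMulVec_single, smul_single, smul_eq_mul, mul_one, diagonal_single]

section Nonneg

variable {m : Type*} [Fintype m] [DecidableEq m]

theorem Matrix.mulVec_apply_pos {K : Matrix m m ℝ} (hK : ∀ i j, 0 ≤ K i j) (hdet : IsUnit K.det)
    {u : m → ℝ} (hu : ∀ i, 0 < u i) (i : m) : 0 < (K *ᵥ u) i := by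
  obtain ⟨j, hj⟩ : ∃ j, K i j ≠ 0 := by
    by_contra! h
    exact hdet.ne_zero (det_eq_zero_of_row_eq_zero i h)
  exact Finset.sum_pos' (fun j _ => mul_nonneg (hK i j) (hu j).le)
    ⟨j, Finset.mem_univ j, mul_pos ((hK i j).lt_of_ne' hj) (hu j)⟩

attribute [local instance] Matrix.linftyOpNormedRing Matrix.linftyOpNormedAlgebra

theorem Matrix.inv_one_sub_apply_nonneg {C : Matrix m m ℝ} (hC : ∀ i j, 0 ≤ C i j)
    (hC₁ : ‖C‖ < 1) (i j : m) : 0 ≤ (1 - C)⁻¹ i j := by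
  have hsum := Pi.hasSum.mp (Pi.hasSum.mp (hasSum_geom_series_inverse C hC₁) i) j
  rw [nonsing_inv_eq_ringInverse]
  exact hsum.nonneg fun k => pow_apply_nonneg hC k i j

theorem Matrix.inv_sub_apply_nonneg {X B : Matrix m m ℝ} (hX : IsUnit X.det)
    (hX' : ∀ i j, 0 ≤ X⁻¹ i j) (hB : ∀ i j, 0 ≤ B i j) (hXB : ‖X⁻¹ * B‖ < 1) (i j : m) :
    0 ≤ (X - B)⁻¹ i j := by
  have hfac : X - B = X * (1 - X⁻¹ * B) := by
    rw [Matrix.mul_sub, Matrix.mul_one, ← Matrix.mul_assoc, mul_nonsing_inv _ hX, Matrix.one_mul]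
  rw [hfac, mul_inv_rev]
  exact mul_apply_nonneg (inv_one_sub_apply_nonneg (mul_apply_nonneg hX' hB) hXB) hX' i j

end Nonneg

theorem Matrix.exists_mulVec_eq_smul_of_mem_spectrum {m K : Type*} [Fintype m] [DecidableEq m]
    [Field K] {M : Matrix m m K} {z : K} (hz : z ∈ spectrum K M) : ∃ v ≠ 0, M *ᵥ v = z • v := by
  rw [← spectrum_toLin', ← Module.End.hasEigenvalue_iff_mem_spectrum] at hz
  obtain ⟨v, hv⟩ := hz.exists_hasEigenvector
  exact ⟨v, hv.2, by simpa using hv.apply_eq_smul⟩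

namespace HurwitzStable

variable {m : Type*} [Fintype m] [DecidableEq m] {A : Matrix m m ℝ}

theorem isUnit_det_smul_one_sub (hA : HurwitzStable A) {s : ℝ} (hs : 0 ≤ s) :
    IsUnit (s • (1 : Matrix m m ℝ) - A).det := by
  by_contra h
  have hmap : (s • (1 : Matrix m m ℝ) - A).map Complex.ofReal
      = algebraMap ℂ (Matrix m m ℂ) s - A.map Complex.ofReal := by
    ext i j
    by_cases hij : i = j <;> simp [algebraMap_matrix_apply, one_apply, hij]
  have hdet : ((s • (1 : Matrix m m ℝ) - A).map Complex.ofReal).det = 0 := by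
    change (Complex.ofRealHom.mapMatrix _).det = 0
    rw [← RingHom.map_det, not_not.mp (isUnit_iff_ne_zero.not.mp h), map_zero]
  have hs' : (s : ℂ) ∈ spectrum ℂ (A.map Complex.ofReal) := by
    rw [spectrum.mem_iff, ← hmap, isUnit_iff_isUnit_det, hdet]
    exact not_isUnit_zero
  simpa using (hA _ hs').trans_le hs

theorem isUnit_det_neg (hA : HurwitzStable A) : IsUnit (-A).det := by
  simpa using hA.isUnit_det_smul_one_sub le_rfl

attribute [local instance] Matrix.linftyOpNormedRing Matrix.linftyOpNormedAlgebra

theorem continuousOn_inv_smul_one_sub (hA : HurwitzStable A) :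
    ContinuousOn (fun s : ℝ => (s • (1 : Matrix m m ℝ) - A)⁻¹) (Set.Ici 0) := by
  intro s hs
  obtain ⟨u, hu⟩ := (isUnit_iff_isUnit_det _).mpr (hA.isUnit_det_smul_one_sub hs)
  have hinv : ContinuousAt Ring.inverse (s • (1 : Matrix m m ℝ) - A) := by
    rw [← hu]
    exact NormedRing.inverse_continuousAt u
  simp_rw [nonsing_inv_eq_ringInverse]
  exact (hinv.comp (f := fun s : ℝ => s • (1 : Matrix m m ℝ) - A) (by fun_prop)).continuousWithinAt

end HurwitzStable

namespace Metzler

variable {m : Type*} [Fintype m] [DecidableEq m] {A : Matrix m m ℝ}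

attribute [local instance] Matrix.linftyOpNormedRing Matrix.linftyOpNormedAlgebra

theorem exists_inv_smul_one_sub_nonneg (hA : Metzler A) :
    ∃ s₀ : ℝ, ∀ s, s₀ ≤ s → ∀ i j, 0 ≤ (s • (1 : Matrix m m ℝ) - A)⁻¹ i j := by
  set σ := ∑ i, |A i i|
  have hB : ∀ i j, 0 ≤ (A + σ • 1) i j := by
    intro i j
    rcases eq_or_ne i j with rfl | hij
    · have := (neg_abs_le (A i i)).trans' (neg_le_neg (Finset.single_le_sum
        (f := fun i => |A i i|) (fun _ _ => abs_nonneg _) (Finset.mem_univ i)))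
      simp only [Matrix.add_apply, Matrix.smul_apply, one_apply_eq, smul_eq_mul, mul_one]
      linarith
    · simpa [one_apply, hij] using hA i j hij
  refine ⟨‖A + σ • 1‖ + 1 - σ, fun s hs i j => ?_⟩
  have hτ : 0 < s + σ := by linarith [norm_nonneg (A + σ • 1)]
  have hsplit : s • (1 : Matrix m m ℝ) - A = (s + σ) • 1 - (A + σ • 1) := by module
  have hinv : ((s + σ) • (1 : Matrix m m ℝ))⁻¹ = (s + σ)⁻¹ • 1 :=
    inv_eq_left_inv (by simp [smul_smul, hτ.ne'])
  rw [hsplit]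
  refine Matrix.inv_sub_apply_nonneg (by simp [hτ.ne']) (fun i j => ?_) hB ?_ i j
  · rw [hinv]
    by_cases h : i = j <;> simp [one_apply, h, hτ.le]
  · rw [hinv, smul_mul, Matrix.one_mul, norm_smul, Real.norm_eq_abs, abs_inv, abs_of_pos hτ,
      inv_mul_lt_iff₀ hτ, mul_one]
    linarith

theorem inv_smul_one_sub_nonneg_of_le {s t : ℝ} (ht : IsUnit (t • (1 : Matrix m m ℝ) - A).det)
    (hRt : ∀ i j, 0 ≤ (t • (1 : Matrix m m ℝ) - A)⁻¹ i j) (hst : s ≤ t)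
    (hsmall : (t - s) * ‖(t • (1 : Matrix m m ℝ) - A)⁻¹‖ < 1) (i j : m) :
    0 ≤ (s • (1 : Matrix m m ℝ) - A)⁻¹ i j := by
  have hsplit : s • (1 : Matrix m m ℝ) - A = (t • 1 - A) - (t - s) • 1 := by module
  rw [hsplit]
  refine Matrix.inv_sub_apply_nonneg ht hRt (fun i j => ?_) ?_ i j
  · by_cases h : i = j <;> simp [one_apply, h, sub_nonneg.mpr hst]
  · rwa [Matrix.mul_smul, Matrix.mul_one, norm_smul, Real.norm_of_nonneg (sub_nonneg.mpr hst)]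

theorem inv_neg_apply_nonneg (hA : Metzler A) (hH : HurwitzStable A) (i j : m) :
    0 ≤ (-A)⁻¹ i j := by
  obtain ⟨s₀, hs₀⟩ := hA.exists_inv_smul_one_sub_nonneg
  obtain ⟨C, hC⟩ := isCompact_Icc.exists_bound_of_continuousOn
    (hH.continuousOn_inv_smul_one_sub.mono (Set.Icc_subset_Ici_self : Set.Icc 0 (s₀ + 1) ⊆ _))
  set δ : ℝ := (|C| + 1)⁻¹
  have hδ : 0 < δ := by positivity
  have hδ₁ : δ ≤ 1 := inv_le_one_of_one_le₀ (by linarith [abs_nonneg C])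
  have hδC : δ * |C| < 1 := by
    rw [inv_mul_lt_iff₀ (by positivity)]
    linarith
  have hdescent : ∀ k : ℕ, ∀ s, 0 ≤ s → s₀ - k * δ ≤ s →
      ∀ i j, 0 ≤ (s • (1 : Matrix m m ℝ) - A)⁻¹ i j := by
    intro k
    induction k with
    | zero => intro s _ hs; exact hs₀ s (by simpa using hs)
    | succ k ih =>
      intro s hs hks
      by_cases hk : s₀ - k * δ ≤ s
      · exact ih s hs hk
      have hkh : 0 ≤ k * δ := mul_nonneg k.cast_nonneg hδ.le
      have hbound : ‖((s + δ) • (1 : Matrix m m ℝ) - A)⁻¹‖ ≤ |C| :=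
        (hC _ ⟨by linarith, by linarith⟩).trans (le_abs_self C)
      refine inv_smul_one_sub_nonneg_of_le (t := s + δ) (hH.isUnit_det_smul_one_sub (by linarith))
        (ih _ (by linarith) (by push_cast at hks; linarith)) (by linarith) ?_
      rw [add_sub_cancel_left]
      exact (mul_le_mul_of_nonneg_left hbound hδ.le).trans_lt hδC
  obtain ⟨k, hk⟩ := exists_nat_ge (s₀ / δ)
  have h0 := hdescent k 0 le_rfl (by rw [div_le_iff₀ hδ] at hk; linarith) i j
  rwa [zero_smul, zero_sub] at h0

theorem exists_pos_mulVec_neg (hA : Metzler A) (hH : HurwitzStable A) :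
    ∃ v : m → ℝ, (∀ i, 0 < v i) ∧ ∀ i, (A *ᵥ v) i < 0 := by
  have hAK : A * (-A)⁻¹ = -1 := by
    rw [← neg_neg A, neg_mul, neg_neg, mul_nonsing_inv _ hH.isUnit_det_neg]
  refine ⟨(-A)⁻¹ *ᵥ 1, mulVec_apply_pos (hA.inv_neg_apply_nonneg hH)
    ((-A).isUnit_nonsing_inv_det hH.isUnit_det_neg) fun _ => one_pos, fun i => ?_⟩
  simp [mulVec_mulVec, hAK, neg_mulVec]

theorem exists_pos_vecMul_neg (hA : Metzler A) (hH : HurwitzStable A) :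
    ∃ w : m → ℝ, (∀ i, 0 < w i) ∧ ∀ i, (w ᵥ* A) i < 0 := by
  have hKA : (-A)⁻¹ * A = -1 := by
    rw [← neg_neg A, mul_neg, neg_neg, nonsing_inv_mul _ hH.isUnit_det_neg]
  refine ⟨1 ᵥ* (-A)⁻¹, fun i => ?_, fun i => ?_⟩
  · rw [← mulVec_transpose]
    exact mulVec_apply_pos (K := (-A)⁻¹ᵀ) (fun i j => hA.inv_neg_apply_nonneg hH j i)
      (by rw [det_transpose]; exact (-A).isUnit_nonsing_inv_det hH.isUnit_det_neg)
      (fun _ => one_pos) i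
  · simp [vecMul_vecMul, hKA, vecMul_neg]

theorem neg_inv_apply_self_pos (hA : Metzler A) (hH : HurwitzStable A) (i : m) :
    0 < -A⁻¹ i i := by
  have hinv : A⁻¹ = -(-A)⁻¹ := inv_eq_right_inv (by
    rw [mul_neg, ← neg_mul, mul_nonsing_inv _ hH.isUnit_det_neg])
  rw [hinv, neg_apply, neg_neg]
  refine (hA.inv_neg_apply_nonneg hH i i).lt_of_ne' fun h0 => ?_
  have hrow : ∑ j, (-A) i j * (-A)⁻¹ j i = 1 := by
    simpa [mul_apply] using congrFun (congrFun (mul_nonsing_inv _ hH.isUnit_det_neg) i) i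
  have hle : ∑ j, (-A) i j * (-A)⁻¹ j i ≤ 0 := Finset.sum_nonpos fun j _ => by
    rcases eq_or_ne j i with rfl | hji
    · simp [h0]
    · exact mul_nonpos_of_nonpos_of_nonneg (by simpa using hA i j hji.symm)
        (hA.inv_neg_apply_nonneg hH j i)
  linarith

end Metzler

section Lyapunov

variable {m : Type*} [Fintype m]

def Matrix.diagLyapunovForm (M : Matrix m m ℝ) (p : m → ℝ) (x : m → ℂ) : ℝ :=
  (∑ i, (p i : ℂ) * (star (x i) * (M.map Complex.ofReal *ᵥ x) i)).re

theorem Matrix.diagLyapunovForm_eq (M : Matrix m m ℝ) (p : m → ℝ) (x : m → ℂ) :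
    M.diagLyapunovForm p x = ∑ i, ∑ j, p i * M i j * (x i).re * (x j).re
      + ∑ i, ∑ j, p i * M i j * (x i).im * (x j).im := by
  simp only [diagLyapunovForm, mulVec, dotProduct, Complex.re_sum, Finset.mul_sum,
    ← Finset.sum_add_distrib]
  refine Finset.sum_congr rfl fun i _ => Finset.sum_congr rfl fun j _ => ?_
  simp [Complex.mul_re, Complex.mul_im]
  ring

namespace Metzler

variable {M : Matrix m m ℝ} {p v : m → ℝ}

theorem sum_mul_mul_le (hM : Metzler M) (hp : ∀ i, 0 ≤ p i) (hv : ∀ i, 0 < v i) (a : m → ℝ) :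
    ∑ i, ∑ j, p i * M i j * a i * a j
      ≤ ∑ i, (p i * (M *ᵥ v) i + ((p * v) ᵥ* M) i) * (a i ^ 2 / v i) / 2 := by
  calc ∑ i, ∑ j, p i * M i j * a i * a j
      ≤ ∑ i, ∑ j, p i * M i j * v i * v j * ((a i / v i) ^ 2 + (a j / v j) ^ 2) / 2 := by
        refine Finset.sum_le_sum fun i _ => Finset.sum_le_sum fun j _ => ?_
        have hvi := (hv i).ne'
        have hvj := (hv j).ne'
        rcases eq_or_ne i j with rfl | hij
        · apply le_of_eq
          field_simp
          ring
        have hgap : v i * v j * ((a i / v i) ^ 2 + (a j / v j) ^ 2) / 2 - a i * a j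
            = (v j * a i - v i * a j) ^ 2 / (2 * (v i * v j)) := by
          field_simp
          ring
        have hamgm : a i * a j ≤ v i * v j * ((a i / v i) ^ 2 + (a j / v j) ^ 2) / 2 := by
          have := div_nonneg (sq_nonneg (v j * a i - v i * a j))
            (mul_pos two_pos (mul_pos (hv i) (hv j))).le
          linarith
        calc p i * M i j * a i * a j = p i * M i j * (a i * a j) := by ring
          _ ≤ _ := mul_le_mul_of_nonneg_left hamgm (mul_nonneg (hp i) (hM i j hij))
          _ = _ := by ring
    _ = _ := by
        simp only [mulVec, vecMul, dotProduct, Pi.mul_apply, add_mul, mul_add, add_div,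
          Finset.mul_sum, Finset.sum_mul, Finset.sum_div, Finset.sum_add_distrib]
        rw [Finset.sum_comm (f := fun i j => p i * M i j * v i * v j * (a j / v j) ^ 2 / 2)]
        congr 1 <;> refine Finset.sum_congr rfl fun i _ => Finset.sum_congr rfl fun j _ => ?_ <;>
          field_simp [(hv i).ne']

theorem sum_mul_mul_neg (hM : Metzler M) (hp : ∀ i, 0 ≤ p i) (hv : ∀ i, 0 < v i)
    (hMv : ∀ i, (M *ᵥ v) i < 0) (hvM : ∀ i, ((p * v) ᵥ* M) i < 0) {a : m → ℝ} (ha : a ≠ 0) :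
    ∑ i, ∑ j, p i * M i j * a i * a j < 0 := by
  have hcoef : ∀ i, p i * (M *ᵥ v) i + ((p * v) ᵥ* M) i < 0 := fun i => by
    linarith [mul_nonpos_of_nonneg_of_nonpos (hp i) (hMv i).le, hvM i]
  obtain ⟨i₀, hi₀⟩ := Function.ne_iff.mp ha
  refine (hM.sum_mul_mul_le hp hv a).trans_lt (Finset.sum_neg' (fun i _ => ?_)
    ⟨i₀, Finset.mem_univ i₀, ?_⟩)
  · exact div_nonpos_of_nonpos_of_nonneg
      (mul_nonpos_of_nonpos_of_nonneg (hcoef i).le (div_nonneg (sq_nonneg _) (hv i).le)) two_pos.le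
  · exact div_neg_of_neg_of_pos
      (mul_neg_of_neg_of_pos (hcoef i₀) (div_pos (sq_pos_of_ne_zero hi₀) (hv i₀))) two_pos

theorem sum_mul_mul_nonpos (hM : Metzler M) (hp : ∀ i, 0 ≤ p i) (hv : ∀ i, 0 < v i)
    (hMv : ∀ i, (M *ᵥ v) i < 0) (hvM : ∀ i, ((p * v) ᵥ* M) i < 0) (a : m → ℝ) :
    ∑ i, ∑ j, p i * M i j * a i * a j ≤ 0 := by
  rcases eq_or_ne a 0 with rfl | ha
  · simp
  · exact (hM.sum_mul_mul_neg hp hv hMv hvM ha).le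

theorem diagLyapunovForm_neg (hM : Metzler M) (hp : ∀ i, 0 ≤ p i) (hv : ∀ i, 0 < v i)
    (hMv : ∀ i, (M *ᵥ v) i < 0) (hvM : ∀ i, ((p * v) ᵥ* M) i < 0) {x : m → ℂ} (hx : x ≠ 0) :
    M.diagLyapunovForm p x < 0 := by
  rw [diagLyapunovForm_eq]
  have hre := hM.sum_mul_mul_nonpos hp hv hMv hvM fun i => (x i).re
  have him := hM.sum_mul_mul_nonpos hp hv hMv hvM fun i => (x i).im
  obtain ⟨i, hi⟩ := Function.ne_iff.mp hx
  rcases not_and_or.mp fun h => hi (Complex.ext h.1 h.2) with h | h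
  · have := hM.sum_mul_mul_neg hp hv hMv hvM (a := fun i => (x i).re) (Function.ne_iff.mpr ⟨i, h⟩)
    linarith
  · have := hM.sum_mul_mul_neg hp hv hMv hvM (a := fun i => (x i).im) (Function.ne_iff.mpr ⟨i, h⟩)
    linarith

theorem sub_diagonal [DecidableEq m] {A : Matrix m m ℝ} (hA : Metzler A) (d : m → ℝ) :
    Metzler (A - diagonal d) :=
  fun i j hij => by simpa [diagonal_apply_ne _ hij] using hA i j hij

theorem exists_diagLyapunovForm_sub_diagonal_neg [DecidableEq m] {A : Matrix m m ℝ}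
    (hA : Metzler A) (hH : HurwitzStable A) :
    ∃ p : m → ℝ, (∀ i, 0 ≤ p i) ∧ ∀ d : m → ℝ, 0 ≤ d →
      ∀ x : m → ℂ, x ≠ 0 → (A - diagonal d).diagLyapunovForm p x < 0 := by
  obtain ⟨v, hv, hAv⟩ := hA.exists_pos_mulVec_neg hH
  obtain ⟨w, hw, hwA⟩ := hA.exists_pos_vecMul_neg hH
  have hpv : (fun i => w i / v i) * v = w := funext fun i => div_mul_cancel₀ _ (hv i).ne'
  refine ⟨fun i => w i / v i, fun i => (div_pos (hw i) (hv i)).le, fun d hd x hx =>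
    (hA.sub_diagonal d).diagLyapunovForm_neg (fun i => (div_pos (hw i) (hv i)).le) hv
      (fun i => ?_) (fun i => ?_) hx⟩
  · simp only [sub_mulVec, mulVec_diagonal, Pi.sub_apply]
    linarith [hAv i, mul_nonneg (hd i) (hv i).le]
  · simp only [hpv, vecMul_sub, vecMul_diagonal, Pi.sub_apply]
    linarith [hwA i, mul_nonneg (hw i).le (hd i)]

end Metzler

theorem re_mul_weighted_normSq_eq_diagLyapunovForm {M : Matrix m m ℝ} {p b c : m → ℝ} {k : ℝ}
    (hbc : ∀ i, p i * b i = -(k * c i)) {z ζ : ℂ} {x : m → ℂ}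
    (hrow : ∀ i, (M.map Complex.ofReal *ᵥ x) i + b i * ζ = z * x i)
    (hlast : ∑ j, c j * x j = z * ζ) :
    z.re * (∑ i, p i * Complex.normSq (x i) + k * Complex.normSq ζ) = M.diagLyapunovForm p x := by
  have hconj : ∀ w : ℂ, star w * (z * w) = z * (Complex.normSq w : ℂ) := fun w => by
    rw [Complex.normSq_eq_conj_mul_self, Complex.star_def]
    ring
  have hcross : (∑ i, (p i : ℂ) * (star (x i) * (b i * ζ))).re
      + (k * (star ζ * ∑ j, c j * x j)).re = 0 := by
    simp only [Complex.re_sum, Finset.mul_sum, ← Finset.sum_add_distrib]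
    refine Finset.sum_eq_zero fun i _ => ?_
    simp [Complex.mul_re, Complex.mul_im]
    linear_combination (ζ.re * (x i).re + ζ.im * (x i).im) * hbc i
  calc z.re * (∑ i, p i * Complex.normSq (x i) + k * Complex.normSq ζ)
      = (∑ i, (p i : ℂ) * (star (x i) * (z * x i)) + k * (star ζ * (z * ζ))).re := by
        rw [← Complex.re_mul_ofReal]
        push_cast
        simp only [hconj, mul_add, Finset.mul_sum]
        congr 2
        · exact Finset.sum_congr rfl fun i _ => by ring
        · ring
    _ = M.diagLyapunovForm p x := by
        simp only [← hrow, ← hlast, mul_add, Finset.sum_add_distrib, Complex.add_re,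
          diagLyapunovForm]
        linarith

variable [DecidableEq m]

theorem hurwitzStable_fromBlocks {M : Matrix m m ℝ} {p : m → ℝ}
    (hp : ∀ i, 0 ≤ p i) (hM : ∀ x : m → ℂ, x ≠ 0 → M.diagLyapunovForm p x < 0)
    {b c : m → ℝ} {k : ℝ} (hk : 0 ≤ k) (hbc : ∀ i, p i * b i = -(k * c i)) (hb : b ≠ 0) :
    HurwitzStable (fromBlocks M (of fun i (_ : Fin 1) => b i) (of fun (_ : Fin 1) j => c j) 0) := by
  intro z hz
  obtain ⟨V, hV0, hV⟩ := exists_mulVec_eq_smul_of_mem_spectrum hz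
  set x : m → ℂ := fun i => V (Sum.inl i)
  set ζ : ℂ := V (Sum.inr 0)
  have hrow : ∀ i, (M.map Complex.ofReal *ᵥ x) i + b i * ζ = z * x i := fun i => by
    simpa [mulVec, dotProduct, Fintype.sum_sum_type] using congrFun hV (Sum.inl i)
  have hlast : ∑ j, c j * x j = z * ζ := by
    simpa [mulVec, dotProduct, Fintype.sum_sum_type] using congrFun hV (Sum.inr 0)
  have hx : x ≠ 0 := by
    intro hx
    obtain ⟨i, hi⟩ := Function.ne_iff.mp hb
    have hζ : ζ = 0 := (by simpa [hx] using hrow i : b i = 0 ∨ ζ = 0).resolve_left hi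
    refine hV0 (funext fun j => ?_)
    rcases j with i | j
    · exact congrFun hx i
    · rw [Subsingleton.elim j 0]
      exact hζ
  have hQ : 0 ≤ ∑ i, p i * Complex.normSq (x i) + k * Complex.normSq ζ :=
    add_nonneg (Finset.sum_nonneg fun i _ => mul_nonneg (hp i) (Complex.normSq_nonneg _))
      (mul_nonneg hk (Complex.normSq_nonneg _))
  by_contra! hz
  linarith [mul_nonneg hz hQ, hM x hx, re_mul_weighted_normSq_eq_diagLyapunovForm hbc hrow hlast]

theorem hurwitzStable_fromBlocks_single {M : Matrix m m ℝ} {p : m → ℝ}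
    (hp : ∀ i, 0 ≤ p i) (hM : ∀ x : m → ℂ, x ≠ 0 → M.diagLyapunovForm p x < 0) (l : m)
    {β γ : ℝ} (hβ : 0 < β) (hγ : 0 < γ) :
    HurwitzStable (fromBlocks M (of fun i (_ : Fin 1) => -β * (Pi.single l 1 : m → ℝ) i)
      (of fun (_ : Fin 1) j => γ * (Pi.single l 1 : m → ℝ) j) 0) := by
  refine hurwitzStable_fromBlocks hp hM (k := β * p l / γ)
    (div_nonneg (mul_nonneg hβ.le (hp l)) hγ.le) (fun i => ?_) fun h => ?_
  · rcases eq_or_ne i l with rfl | hi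
    · field_simp
    · simp [hi]
  · simpa [hβ.ne'] using congrFun h l

end Lyapunov

theorem stmt18_general (n : ℕ) (A : Matrix (Fin (n+1)) (Fin (n+1)) ℝ)
    (hMetz : Metzler A) (hHur : HurwitzStable A)
    (g₀ gn μ : ℝ)
    (hgn : gn = -(A⁻¹ (Fin.last n) (Fin.last n)))
    (hμ : 0 < μ) (hμg : μ < g₀) :
    ∀ α kp : ℝ, 0 < α → 0 < kp →
      HurwitzStable (Matrix.fromBlocks
        (A - ((g₀ - μ) / (gn * μ)) • Matrix.vecMulVec
          (Pi.single (Fin.last n) 1) (Pi.single (Fin.last n) 1))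
        (Matrix.of fun (i : Fin (n+1)) (_ : Fin 1) =>
          -(kp * μ) * (Pi.single (Fin.last n) 1 : Fin (n+1) → ℝ) i)
        (Matrix.of fun (_ : Fin 1) (j : Fin (n+1)) =>
          (α * (g₀ - μ) / (gn * μ * kp)) * (Pi.single (Fin.last n) 1 : Fin (n+1) → ℝ) j)
        (0 : Matrix (Fin 1) (Fin 1) ℝ)) := by
  intro α kp hα hkp
  obtain ⟨p, hp, hLyap⟩ := hMetz.exists_diagLyapunovForm_sub_diagonal_neg hHur
  have hgn_pos : 0 < gn := hgn ▸ hMetz.neg_inv_apply_self_pos hHur (Fin.last n)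
  have hc : 0 ≤ (g₀ - μ) / (gn * μ) := (div_pos (sub_pos.mpr hμg) (mul_pos hgn_pos hμ)).le
  have hγ : 0 < α * (g₀ - μ) / (gn * μ * kp) :=
    div_pos (mul_pos hα (sub_pos.mpr hμg)) (by positivity)
  rw [smul_vecMulVec_single_self]
  exact hurwitzStable_fromBlocks_single hp (hLyap _ (Pi.single_nonneg.mpr hc)) _
    (mul_pos hkp hμ) hγ

/-- Structural stability of the p-type exponential integral controller (stable case):
the Jacobian of the closed-loop system at the positive equilibrium is Hurwitz stable for
all controller parameters α, k_p > 0 whenever 0 < μ < g₀. -/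
theorem stmt18 (n : ℕ) (A : Matrix (Fin (n+1)) (Fin (n+1)) ℝ)
    (hMetz : Metzler A) (hHur : HurwitzStable A)
    (b₀ : Fin (n+1) → ℝ) (hb₀ : ∀ i, 0 ≤ b₀ i)
    (g₀ gn μ : ℝ)
    (hg₀ : g₀ = -((A⁻¹ *ᵥ b₀) (Fin.last n)))
    (hgn : gn = -(A⁻¹ (Fin.last n) (Fin.last n)))
    (hμ : 0 < μ) (hμg : μ < g₀) :
    ∀ α kp : ℝ, 0 < α → 0 < kp →
      HurwitzStable (Matrix.fromBlocks
        (A - ((g₀ - μ) / (gn * μ)) • Matrix.vecMulVec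
          (Pi.single (Fin.last n) 1) (Pi.single (Fin.last n) 1))
        (Matrix.of fun (i : Fin (n+1)) (_ : Fin 1) =>
          -(kp * μ) * (Pi.single (Fin.last n) 1 : Fin (n+1) → ℝ) i)
        (Matrix.of fun (_ : Fin 1) (j : Fin (n+1)) =>
          (α * (g₀ - μ) / (gn * μ * kp)) * (Pi.single (Fin.last n) 1 : Fin (n+1) → ℝ) j)
        (0 : Matrix (Fin 1) (Fin 1) ℝ)) :=
  stmt18_general n A hMetz hHur g₀ gn μ hgn hμ hμg
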